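/- (Osgood-type uniqueness lemma.) Let T > 0, let f ∈ L¹(0,T) with f ≥ 0 a.e., let K ≥ 0 and C > 0, and let y : [0,T] → [0,∞) be continuous with y(0) = 0 and y(t) ≤ C ∫₀ᵗ f(s) y(s) ( |ln y(s)| + K ) ds for all t ∈ [0,T], where the integrand is interpreted as 0 at points where y(s) = 0. Then y(t) = 0 for all t ∈ [0,T]. -/

import Mathlib

open MeasureTheory Set
open Filter Real Topology
open scoped NNReal

/-!
Put `F t = ∫₀ᵗ f` and `c = 2C`. For `A ≥ (K + 1) e^{c F(T)}` the function `v = Φ ∘ F`,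
`Φ u = exp (K - A e^{-c u})`, takes values in `(0, e⁻¹]`, where `w ↦ w (|log w| + K)` is
increasing, and solves `v' = c f v (|log v| + K)`; hence
`C ∫₀^τ f v (|log v| + K) = (v τ - v 0) / 2 < v τ`. So `y` cannot catch up with `v`: at
the first time `τ` with `v τ ≤ y τ` we have `y ≤ v` on `[0, τ]`, and the integral inequality
gives `y τ < v τ`. Thus `y < v` on `[0, T]` for every such `A`, and `v t → 0` as `A → ∞`.

Since `f` is only integrable, `F` is merely absolutely continuous, and the identity for `v` is
the chain rule `(Φ ∘ F)' = Φ' (F) f`, valid almost everywhere, integrated with the fundamental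
theorem of calculus for absolutely continuous functions.
-/

theorem LipschitzOnWith.comp_absolutelyContinuousOnInterval {X Y : Type*} [PseudoMetricSpace X]
    [PseudoMetricSpace Y] {Φ : X → Y} {F : ℝ → X} {s : Set X} {L : ℝ≥0} {a b : ℝ}
    (hΦ : LipschitzOnWith L Φ s) (hF : AbsolutelyContinuousOnInterval F a b)
    (hFs : MapsTo F (uIcc a b) s) : AbsolutelyContinuousOnInterval (Φ ∘ F) a b := by
  unfold AbsolutelyContinuousOnInterval at hF ⊢
  have hbound := hF.const_mul (L : ℝ)
  rw [mul_zero] at hbound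
  refine squeeze_zero' (.of_forall fun _ => Finset.sum_nonneg fun _ _ => dist_nonneg) ?_ hbound
  filter_upwards [mem_inf_of_right (mem_principal_self _)] with E hE
  rw [Finset.mul_sum]
  gcongr with i hi
  exact hΦ.dist_le_mul _ (hFs (hE.1 i hi).1) _ (hFs (hE.1 i hi).2)

theorem intervalIntegral.integral_comp_primitive_mul {f g : ℝ → ℝ} {a b : ℝ}
    (hf : IntervalIntegrable f volume a b) (hg : Continuous g) :
    ∫ s in a..b, g (∫ t in a..s, f t) * f s
      = ∫ u in (0 : ℝ)..(∫ t in a..b, f t), g u := by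
  set F : ℝ → ℝ := fun x => ∫ t in a..x, f t
  set G : ℝ → ℝ := fun u => ∫ v in (0 : ℝ)..u, g v
  have hG : ∀ u, HasDerivAt G (g u) u := fun u => (hg.integral_hasStrictDerivAt 0 u).hasDerivAt
  have hF_ac : AbsolutelyContinuousOnInterval F a b :=
    hf.absolutelyContinuousOnInterval_intervalIntegral left_mem_uIcc
  have hGF_ac : AbsolutelyContinuousOnInterval (G ∘ F) a b := by
    obtain ⟨M, hM⟩ := hF_ac.exists_bound
    have hG_C1 : ContDiff ℝ 1 G :=
      contDiff_one_iff_deriv.mpr ⟨fun u => (hG u).differentiableAt, by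
        rwa [show deriv G = g from funext fun u => (hG u).deriv]⟩
    obtain ⟨L, hL⟩ := hG_C1.contDiffOn.exists_lipschitzOnWith one_ne_zero (convex_Icc (-M) M)
      isCompact_Icc
    exact hL.comp_absolutelyContinuousOnInterval hF_ac fun x hx => abs_le.mp (hM x hx)
  have hderiv : ∀ᵐ s, s ∈ uIoc a b → deriv (G ∘ F) s = g (F s) * f s := by
    filter_upwards [hf.ae_hasDerivAt_integral] with s hs hs_mem
    exact ((hG (F s)).comp s (hs (uIoc_subset_uIcc hs_mem) a left_mem_uIcc)).deriv
  rw [← intervalIntegral.integral_congr_ae hderiv, hGF_ac.integral_deriv_eq_sub]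
  simp [F, G]

theorem monotoneOn_primitive_of_ae_nonneg {f : ℝ → ℝ} {a b : ℝ}
    (hf : IntegrableOn f (Icc a b))
    (hf_nonneg : ∀ᵐ s ∂(volume.restrict (Icc a b)), 0 ≤ f s) :
    MonotoneOn (fun t => ∫ s in a..t, f s) (Icc a b) := fun s hs t ht hst =>
  intervalIntegral.integral_mono_interval le_rfl hs.1 hst
    (ae_restrict_of_ae_restrict_of_subset (Ioc_subset_Icc_self.trans (Icc_subset_Icc_right ht.2))
      hf_nonneg)
    ((intervalIntegrable_iff_integrableOn_Icc_of_le (hs.1.trans hst)).mpr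
      (hf.mono_set (Icc_subset_Icc_right ht.2)))

theorem lt_on_Icc_of_first_crossing {u w : ℝ → ℝ} {a b : ℝ} (hu : ContinuousOn u (Icc a b))
    (hw : ContinuousOn w (Icc a b)) (ha : u a < w a)
    (hstep : ∀ τ ∈ Ioc a b, (∀ s ∈ Icc a τ, u s ≤ w s) → u τ < w τ) :
    ∀ t ∈ Icc a b, u t < w t := by
  by_contra! hcross
  set S := Icc a b ∩ (w - u) ⁻¹' Iic 0
  have hS_compact : IsCompact S := isCompact_Icc.of_isClosed_subset
    ((hw.sub hu).preimage_isClosed_of_isClosed isClosed_Icc isClosed_Iic) inter_subset_left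
  obtain ⟨t, ht, htu⟩ := hcross
  set τ := sInf S
  obtain ⟨hτ, hτ_cross⟩ : τ ∈ S := hS_compact.sInf_mem ⟨t, ht, by simpa using htu⟩
  simp only [mem_preimage, Pi.sub_apply, mem_Iic, sub_nonpos] at hτ_cross
  have hτ_ne : τ ≠ a := fun hτa => (hτa ▸ hτ_cross).not_gt ha
  have hbefore : ∀ s ∈ Ico a τ, u s < w s := fun s hs => by
    by_contra! hs_cross
    have : τ ≤ s :=
      csInf_le hS_compact.bddBelow ⟨⟨hs.1, hs.2.le.trans hτ.2⟩, by simpa using hs_cross⟩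
    exact this.not_gt hs.2
  have hsub : Ico a τ ⊆ Icc a b := Ico_subset_Icc_self.trans (Icc_subset_Icc_right hτ.2)
  have hat : u τ ≤ w τ :=
    ContinuousWithinAt.closure_le (by simp [closure_Ico hτ_ne.symm, hτ.1])
      ((hu τ hτ).mono hsub) ((hw τ hτ).mono hsub) fun s hs => (hbefore s hs).le
  have hupto : ∀ s ∈ Icc a τ, u s ≤ w s := fun s hs =>
    (eq_or_lt_of_le hs.2).elim (· ▸ hat) fun h => (hbefore s ⟨hs.1, h⟩).le
  exact (hstep τ ⟨lt_of_le_of_ne hτ.1 hτ_ne.symm, hτ.2⟩ hupto).not_ge hτ_cross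

noncomputable def osgoodRate (K w : ℝ) : ℝ := w * (|log w| + K)

theorem osgoodRate_nonneg {K w : ℝ} (hK : 0 ≤ K) (hw : 0 ≤ w) : 0 ≤ osgoodRate K w := by
  unfold osgoodRate
  positivity

theorem monotoneOn_osgoodRate {K : ℝ} (hK : 0 ≤ K) :
    MonotoneOn (osgoodRate K) (Icc 0 (exp (-1))) := by
  have hform : ∀ w ∈ Icc 0 (exp (-1)), osgoodRate K w = K * w - w * log w := fun w hw => by
    rw [osgoodRate, abs_of_nonpos (log_nonpos hw.1 (hw.2.trans (exp_le_one_iff.mpr (by norm_num))))]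
    ring
  intro a ha b hb hab
  rw [hform a ha, hform b hb]
  linarith [mul_log_strictAntiOn.antitoneOn ha hb hab, mul_le_mul_of_nonneg_left hab hK]

/-- `log Φ = K - A e^{-c u}`, so while `A e^{-c u} ≥ K` we have `|log Φ| + K = A e^{-c u}` and
`Φ' = c A e^{-c u} Φ = c · osgoodRate K Φ`. -/
noncomputable def osgoodProfile (K A c u : ℝ) : ℝ := exp (K - A * exp (-(c * u)))

theorem continuous_osgoodProfile (K A c : ℝ) : Continuous (osgoodProfile K A c) := by
  unfold osgoodProfile
  fun_prop

theorem continuous_osgoodRate_osgoodProfile (K A c : ℝ) :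
    Continuous fun u => osgoodRate K (osgoodProfile K A c u) := by
  simp only [osgoodRate, osgoodProfile, log_exp]
  fun_prop

theorem osgoodProfile_le_exp_neg_one {K A c u : ℝ} (h : K + 1 ≤ A * exp (-(c * u))) :
    osgoodProfile K A c u ≤ exp (-1) :=
  exp_le_exp.mpr (by linarith)

theorem osgoodRate_osgoodProfile {K A c u : ℝ} (h : K ≤ A * exp (-(c * u))) :
    osgoodRate K (osgoodProfile K A c u) = A * exp (-(c * u)) * osgoodProfile K A c u := by
  rw [osgoodRate, osgoodProfile, log_exp, abs_of_nonpos (by linarith)]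
  ring

theorem hasDerivAt_osgoodProfile {K A c u : ℝ} (h : K ≤ A * exp (-(c * u))) :
    HasDerivAt (osgoodProfile K A c) (c * osgoodRate K (osgoodProfile K A c u)) u := by
  rw [osgoodRate_osgoodProfile h]
  have hlin : HasDerivAt (fun x => -(c * x)) (-c) u := by
    simpa using ((hasDerivAt_id u).const_mul c).fun_neg
  unfold osgoodProfile
  convert ((hlin.exp.const_mul A).const_sub K).exp using 1
  ring

theorem tendsto_osgoodProfile_atTop (K c u : ℝ) :
    Tendsto (fun A => osgoodProfile K A c u) atTop (𝓝 0) :=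
  tendsto_exp_atBot.comp <| tendsto_atBot_add_const_left _ K <|
    tendsto_neg_atTop_atBot.comp (tendsto_id.atTop_mul_const (exp_pos _))

theorem setIntegral_mul_osgoodRate_le {α : Type*} [MeasurableSpace α] {μ : Measure α}
    {s : Set α} {f y z : α → ℝ} {K : ℝ} (hK : 0 ≤ K) (hs : MeasurableSet s)
    (hf_nonneg : ∀ᵐ x ∂(μ.restrict s), 0 ≤ f x)
    (hfz : IntegrableOn (fun x => f x * osgoodRate K (z x)) s μ) (hy : ∀ x ∈ s, 0 ≤ y x)
    (hyz : ∀ x ∈ s, y x ≤ z x) (hz : ∀ x ∈ s, z x ≤ exp (-1)) :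
    ∫ x in s, f x * osgoodRate K (y x) ∂μ ≤ ∫ x in s, f x * osgoodRate K (z x) ∂μ := by
  refine integral_mono_of_nonneg ?_ hfz ?_ <;>
    filter_upwards [hf_nonneg, ae_restrict_mem hs] with x hfx hx
  · exact mul_nonneg hfx (osgoodRate_nonneg hK (hy x hx))
  · have hyx : y x ∈ Icc 0 (exp (-1)) := ⟨hy x hx, (hyz x hx).trans (hz x hx)⟩
    have hzx : z x ∈ Icc 0 (exp (-1)) := ⟨hyx.1.trans (hyz x hx), hz x hx⟩
    exact mul_le_mul_of_nonneg_left (monotoneOn_osgoodRate hK hyx hzx (hyz x hx)) hfx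

theorem mul_integral_mul_osgoodRate_osgoodProfile_primitive {f : ℝ → ℝ} {K A c a b : ℝ}
    (hf : IntervalIntegrable f volume a b)
    (hlarge : ∀ u ∈ uIcc 0 (∫ t in a..b, f t), K ≤ A * exp (-(c * u))) :
    c * ∫ s in a..b, f s * osgoodRate K (osgoodProfile K A c (∫ t in a..s, f t))
      = osgoodProfile K A c (∫ t in a..b, f t) - osgoodProfile K A c 0 := by
  simp only [mul_comm (f _)]
  rw [intervalIntegral.integral_comp_primitive_mul
    (g := fun u => osgoodRate K (osgoodProfile K A c u)) hf
    (continuous_osgoodRate_osgoodProfile K A c), ← intervalIntegral.integral_const_mul]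
  exact intervalIntegral.integral_eq_sub_of_hasDerivAt
    (fun u hu => hasDerivAt_osgoodProfile (hlarge u hu))
    (((continuous_osgoodRate_osgoodProfile K A c).const_mul c).intervalIntegrable _ _)

theorem mul_setIntegral_mul_osgoodRate_lt_osgoodProfile {τ K C A : ℝ} {f y : ℝ → ℝ}
    (hτ : 0 ≤ τ) (hf_int : IntegrableOn f (Icc 0 τ))
    (hf_nonneg : ∀ᵐ s ∂(volume.restrict (Icc 0 τ)), 0 ≤ f s) (hK : 0 ≤ K) (hC : 0 < C)
    (hA : (K + 1) * exp (2 * C * ∫ s in (0 : ℝ)..τ, f s) ≤ A)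
    (hy_nonneg : ∀ s ∈ Icc 0 τ, 0 ≤ y s)
    (hle : ∀ s ∈ Icc 0 τ, y s ≤ osgoodProfile K A (2 * C) (∫ t in (0 : ℝ)..s, f t)) :
    C * ∫ s in Ioc 0 τ, f s * osgoodRate K (y s)
      < osgoodProfile K A (2 * C) (∫ t in (0 : ℝ)..τ, f t) := by
  set c := 2 * C
  set F : ℝ → ℝ := fun t => ∫ s in (0 : ℝ)..t, f s
  set Φ := osgoodProfile K A c
  have hτ_mem : τ ∈ Icc 0 τ := ⟨hτ, le_rfl⟩
  have hF_mono : MonotoneOn F (Icc 0 τ) := monotoneOn_primitive_of_ae_nonneg hf_int hf_nonneg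
  have hF_nonneg : 0 ≤ F τ := by
    simpa [F] using hF_mono ⟨le_rfl, hτ⟩ hτ_mem hτ
  have hlarge : ∀ u ≤ F τ, K + 1 ≤ A * exp (-(c * u)) := fun u hu =>
    calc K + 1 = (K + 1) * exp (c * F τ) * exp (-(c * F τ)) := by
          rw [mul_assoc, ← exp_add, add_neg_cancel, exp_zero, mul_one]
      _ ≤ A * exp (-(c * u)) := by
          gcongr
          exact (mul_pos (by linarith) (exp_pos _)).le.trans hA
  have hrange : ∀ u ∈ uIcc 0 (F τ), K ≤ A * exp (-(c * u)) := fun u hu => by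
    rw [uIcc_of_le hF_nonneg] at hu
    linarith [hlarge u hu.2]
  have hF_cont : ContinuousOn F (Icc 0 τ) :=
    (intervalIntegral.continuousOn_primitive hf_int).congr fun s hs =>
      intervalIntegral.integral_of_le hs.1
  have hintegrable : IntegrableOn (fun s => f s * osgoodRate K (Φ (F s))) (Ioc 0 τ) :=
    (hf_int.mul_continuousOn ((continuous_osgoodRate_osgoodProfile K A c).comp_continuousOn
      hF_cont) isCompact_Icc).mono_set Ioc_subset_Icc_self
  have hcomparison := setIntegral_mul_osgoodRate_le hK measurableSet_Ioc
    (ae_restrict_of_ae_restrict_of_subset Ioc_subset_Icc_self hf_nonneg) hintegrable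
    (fun s hs => hy_nonneg s (Ioc_subset_Icc_self hs)) (fun s hs => hle s (Ioc_subset_Icc_self hs))
    fun s hs => osgoodProfile_le_exp_neg_one
      (hlarge _ (hF_mono (Ioc_subset_Icc_self hs) hτ_mem hs.2))
  calc C * ∫ s in Ioc 0 τ, f s * osgoodRate K (y s)
      ≤ C * ∫ s in Ioc 0 τ, f s * osgoodRate K (Φ (F s)) := by gcongr
    _ = (Φ (F τ) - Φ 0) / 2 := by
        rw [← intervalIntegral.integral_of_le hτ,
          ← mul_integral_mul_osgoodRate_osgoodProfile_primitive
            ((intervalIntegrable_iff_integrableOn_Icc_of_le hτ).mpr hf_int) hrange]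
        ring
    _ < Φ (F τ) := by linarith [show 0 < Φ 0 from exp_pos _, show 0 < Φ (F τ) from exp_pos _]

theorem lt_osgoodProfile {T K C A : ℝ} {f y : ℝ → ℝ} (hf_int : IntegrableOn f (Icc 0 T))
    (hf_nonneg : ∀ᵐ s ∂(volume.restrict (Icc 0 T)), 0 ≤ f s) (hK : 0 ≤ K) (hC : 0 < C)
    (hy_cont : ContinuousOn y (Icc 0 T)) (hy_nonneg : ∀ t ∈ Icc 0 T, 0 ≤ y t) (hy0 : y 0 = 0)
    (hineq : ∀ t ∈ Icc 0 T, y t ≤ C * ∫ s in Ioc 0 t, f s * osgoodRate K (y s))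
    (hA : (K + 1) * exp (2 * C * ∫ s in (0 : ℝ)..T, f s) ≤ A) :
    ∀ t ∈ Icc 0 T, y t < osgoodProfile K A (2 * C) (∫ s in (0 : ℝ)..t, f s) := by
  have hF_cont : ContinuousOn (fun t => ∫ s in (0 : ℝ)..t, f s) (Icc 0 T) :=
    (intervalIntegral.continuousOn_primitive hf_int).congr fun s hs =>
      intervalIntegral.integral_of_le hs.1
  refine lt_on_Icc_of_first_crossing hy_cont
    ((continuous_osgoodProfile K A (2 * C)).comp_continuousOn hF_cont)
    (by simp [hy0, osgoodProfile, exp_pos]) fun τ hτ hle => ?_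
  have hτT : Icc 0 τ ⊆ Icc 0 T := Icc_subset_Icc_right hτ.2
  have hτ_mem : τ ∈ Icc 0 T := hτT ⟨hτ.1.le, le_rfl⟩
  have hAτ : (K + 1) * exp (2 * C * ∫ s in (0 : ℝ)..τ, f s) ≤ A := by
    refine le_trans ?_ hA
    gcongr
    exact monotoneOn_primitive_of_ae_nonneg hf_int hf_nonneg hτ_mem
      ⟨hτ_mem.1.trans hτ.2, le_rfl⟩ hτ.2
  exact (hineq τ hτ_mem).trans_lt (mul_setIntegral_mul_osgoodRate_lt_osgoodProfile hτ.1.le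
    (hf_int.mono_set hτT) (ae_restrict_of_ae_restrict_of_subset hτT hf_nonneg) hK hC hAτ
    (fun s hs => hy_nonneg s (hτT hs)) hle)

theorem osgood_uniqueness_general (T : ℝ) (f : ℝ → ℝ)
    (hf_int : IntegrableOn f (Ioo 0 T))
    (hf_nonneg : ∀ᵐ s ∂(volume.restrict (Ioo 0 T)), 0 ≤ f s)
    (K C : ℝ) (hK : 0 ≤ K) (hC : 0 < C)
    (y : ℝ → ℝ) (hy_cont : ContinuousOn y (Icc 0 T))
    (hy_nonneg : ∀ t ∈ Icc (0 : ℝ) T, 0 ≤ y t) (hy0 : y 0 = 0)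
    (hineq : ∀ t ∈ Icc (0 : ℝ) T,
      y t ≤ C * ∫ s in Ioc (0 : ℝ) t, f s * (y s * (|Real.log (y s)| + K))) :
    ∀ t ∈ Icc (0 : ℝ) T, y t = 0 := by
  have hf_int' : IntegrableOn f (Icc 0 T) := hf_int.congr_set_ae Ioo_ae_eq_Icc.symm
  rw [Measure.restrict_congr_set Ioo_ae_eq_Icc] at hf_nonneg
  intro t ht
  refine le_antisymm (ge_of_tendsto
    (tendsto_osgoodProfile_atTop K (2 * C) (∫ s in (0 : ℝ)..t, f s)) ?_) (hy_nonneg t ht)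
  filter_upwards [eventually_ge_atTop ((K + 1) * exp (2 * C * ∫ s in (0 : ℝ)..T, f s))]
    with A hA
  exact (lt_osgoodProfile hf_int' hf_nonneg hK hC hy_cont hy_nonneg hy0 hineq hA t ht).le

/-- **Osgood-type uniqueness lemma.** Let `T > 0`, `f ∈ L¹(0,T)` with `f ≥ 0`
a.e., `K ≥ 0`, `C > 0`, and let `y : [0,T] → [0,∞)` be continuous with `y 0 = 0` and
`y t ≤ C ∫₀ᵗ f s · y s · (|ln (y s)| + K) ds` for all `t ∈ [0,T]`.  (The convention
`0 · |ln 0| = 0` holds automatically, since `Real.log 0 = 0`.)  Then `y ≡ 0` on `[0,T]`. -/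
theorem osgood_uniqueness (T : ℝ) (hT : 0 < T) (f : ℝ → ℝ)
    (hf_int : IntegrableOn f (Ioo 0 T))
    (hf_nonneg : ∀ᵐ s ∂(volume.restrict (Ioo 0 T)), 0 ≤ f s)
    (K C : ℝ) (hK : 0 ≤ K) (hC : 0 < C)
    (y : ℝ → ℝ) (hy_cont : ContinuousOn y (Icc 0 T))
    (hy_nonneg : ∀ t ∈ Icc (0 : ℝ) T, 0 ≤ y t) (hy0 : y 0 = 0)
    (hineq : ∀ t ∈ Icc (0 : ℝ) T,
      y t ≤ C * ∫ s in Ioc (0 : ℝ) t, f s * (y s * (|Real.log (y s)| + K))) :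
    ∀ t ∈ Icc (0 : ℝ) T, y t = 0 :=
  osgood_uniqueness_general T f hf_int hf_nonneg K C hK hC y hy_cont hy_nonneg hy0 hineq
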